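/- Let φ be a p-embedding of a negative definite plumbing tree Γ into ℤ^N. Then: (i) if Γ' is a nonempty connected subgraph with φ(∑_{v∈Γ'} v) = −∑_{j∈I} e_j and u is a vertex of Γ adjacent to Γ', then φ(∑_{v∈Γ'∪{u}} v) is also of the form −∑_{j∈I'} e_j; (ii) there is at most one vertex w of Γ whose image φ(w) is of the form −∑_{j∈W} e_j (i.e. has no positive basis element), and if such a vertex w exists, then for every connected subgraph Γ' containing w — in particular for Γ itself — φ(∑_{v∈Γ'} v) is of the form −∑_{j∈I} e_j. -/

import Mathlib

open Finset

/-- The `i`-th standard basis vector of `ℤ^N`. -/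
def eVec {N : ℕ} (i : Fin N) : Fin N → ℤ := Pi.single i 1

/-- The pairing of the diagonal lattice `(ℤ^N, ⟨-1⟩^N)`:
`⟨e i, e j⟩ = -δᵢⱼ`. -/
def diagPair {N : ℕ} (x y : Fin N → ℤ) : ℤ := -(∑ i, x i * y i)

/-- A plumbing graph: a finite set of vertices (a finite subset of `ℕ`), a symmetric
irreflexive adjacency relation supported on the vertices, and an integer framing
attached to each vertex. -/
structure Plumbing where
  verts : Finset ℕ
  adj : ℕ → ℕ → Bool
  adj_symm : ∀ u v, adj u v = adj v u
  adj_irrefl : ∀ v, adj v v = false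
  adj_support : ∀ u v, adj u v = true → u ∈ verts ∧ v ∈ verts
  framing : ℕ → ℤ

namespace Plumbing

/-- The underlying simple graph of a plumbing graph. -/
def toSG (G : Plumbing) : SimpleGraph ℕ where
  Adj u v := G.adj u v = true
  symm := by
    constructor
    intro u v h
    rw [G.adj_symm v u]
    exact h
  loopless := by
    constructor
    intro v h
    simp [G.adj_irrefl v] at h

/-- The entries of the intersection matrix `Q_Γ`:
`q v v` is the framing, `q u v = 1` if `u,v` adjacent, `0` otherwise. -/
def q (G : Plumbing) (u v : ℕ) : ℤ :=
  if u = v then G.framing u else if G.adj u v = true then 1 else 0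

/-- The intersection form `Q_Γ` on `ℤ^{V(Γ)}`; vectors are represented as functions
`ℕ → ℤ` (only the values on the vertices matter). -/
def QF (G : Plumbing) (x y : ℕ → ℤ) : ℤ :=
  ∑ u ∈ G.verts, ∑ v ∈ G.verts, x u * y v * G.q u v

/-- The plumbing graph is a forest (acyclic). -/
def IsForest (G : Plumbing) : Prop := G.toSG.IsAcyclic

/-- The subset `S` of vertices induces a connected subgraph: any two of its
vertices are joined by a walk staying inside `S`. -/
def ConnOn (G : Plumbing) (S : Finset ℕ) : Prop :=
  ∀ u ∈ S, ∀ v ∈ S, ∃ p : G.toSG.Walk u v, ∀ x ∈ p.support, x ∈ S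

/-- The plumbing graph is a tree: acyclic and connected. -/
def IsTree (G : Plumbing) : Prop := G.IsForest ∧ G.ConnOn G.verts

/-- The intersection form is negative definite. -/
def NegDef (G : Plumbing) : Prop :=
  ∀ x : ℕ → ℤ, (∃ v ∈ G.verts, x v ≠ 0) → G.QF x x < 0

/-- The intersection form is negative semidefinite. -/
def NegSemiDef (G : Plumbing) : Prop := ∀ x : ℕ → ℤ, G.QF x x ≤ 0

/-- The degree (valency) of a vertex. -/
def degree (G : Plumbing) (v : ℕ) : ℕ :=
  (G.verts.filter fun u => G.adj v u = true).card

/-- An s-embedding of a plumbing graph into the diagonal lattice `ℤ^N`: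
an injective form-preserving linear map (recorded by the images `φ v` of
the vertices) such that the sum of the images of the vertices of every nonempty
connected subgraph has the form `e_γ - ∑_{j ∈ I} e_j` with `γ ∉ I`. -/
structure IsSEmb (G : Plumbing) {N : ℕ} (φ : ℕ → Fin N → ℤ) : Prop where
  pairing : ∀ u ∈ G.verts, ∀ v ∈ G.verts, diagPair (φ u) (φ v) = G.q u v
  indep : LinearIndependent ℤ (fun v : {x // x ∈ G.verts} => φ v.val)
  subgraphSum : ∀ S : Finset ℕ, S ⊆ G.verts → S.Nonempty → G.ConnOn S →
    ∃ (γ : Fin N) (I : Finset (Fin N)), γ ∉ I ∧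
      (∑ v ∈ S, φ v) = eVec γ - ∑ j ∈ I, eVec j

/-- A p-embedding of a plumbing graph into the diagonal lattice `ℤ^N`:
an injective form-preserving linear map such that the sum of the images of the
vertices of every nonempty connected subgraph has the form `e_γ - ∑_{j ∈ I} e_j`
with `γ ∉ I`, or the form `-∑_{j ∈ I} e_j`. -/
structure IsPEmb (G : Plumbing) {N : ℕ} (φ : ℕ → Fin N → ℤ) : Prop where
  pairing : ∀ u ∈ G.verts, ∀ v ∈ G.verts, diagPair (φ u) (φ v) = G.q u v
  indep : LinearIndependent ℤ (fun v : {x // x ∈ G.verts} => φ v.val)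
  subgraphSum : ∀ S : Finset ℕ, S ⊆ G.verts → S.Nonempty → G.ConnOn S →
    (∃ (γ : Fin N) (I : Finset (Fin N)), γ ∉ I ∧
      (∑ v ∈ S, φ v) = eVec γ - ∑ j ∈ I, eVec j) ∨
    (∃ I : Finset (Fin N), (∑ v ∈ S, φ v) = -(∑ j ∈ I, eVec j))

/-- The number of vertices `v` such that `e k` appears with coefficient `+1` in `φ v`. -/
def posCount (G : Plumbing) {N : ℕ} (φ : ℕ → Fin N → ℤ) (k : Fin N) : ℕ :=
  (G.verts.filter fun v => φ v k = 1).card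

/-- The number of vertices `v` such that `e k` appears with coefficient `-1` in `φ v`. -/
def negCount (G : Plumbing) {N : ℕ} (φ : ℕ → Fin N → ℤ) (k : Fin N) : ℕ :=
  (G.verts.filter fun v => φ v k = -1).card

/-- `e k` is of type 1: coefficient `+1` in exactly one vertex image, `-1` in none. -/
def IsType1 (G : Plumbing) {N : ℕ} (φ : ℕ → Fin N → ℤ) (k : Fin N) : Prop :=
  posCount G φ k = 1 ∧ negCount G φ k = 0

/-- `e k` is of type 2: coefficient `-1` in exactly one vertex image, `+1` in none. -/
def IsType2 (G : Plumbing) {N : ℕ} (φ : ℕ → Fin N → ℤ) (k : Fin N) : Prop :=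
  posCount G φ k = 0 ∧ negCount G φ k = 1

/-- `e k` is of type 3: coefficient `+1` in exactly one vertex image, `-1` in exactly one. -/
def IsType3 (G : Plumbing) {N : ℕ} (φ : ℕ → Fin N → ℤ) (k : Fin N) : Prop :=
  posCount G φ k = 1 ∧ negCount G φ k = 1

/-- `e k` is of type 4: coefficient `+1` in exactly one vertex image, `-1` in exactly two. -/
def IsType4 (G : Plumbing) {N : ℕ} (φ : ℕ → Fin N → ℤ) (k : Fin N) : Prop :=
  posCount G φ k = 1 ∧ negCount G φ k = 2

/-- `G'` is the vertex blowup of `G` at the vertex `v`, with new vertex `b`: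
`b` is a new `(-1)`-framed leaf joined to `v`, and the framing of `v` drops by 1. -/
structure VertexBlowup (G G' : Plumbing) (v b : ℕ) : Prop where
  v_mem : v ∈ G.verts
  b_new : b ∉ G.verts
  verts_eq : G'.verts = insert b G.verts
  adj_iff : ∀ x y, (G'.adj x y = true) ↔
    (G.adj x y = true ∨ (x = v ∧ y = b) ∨ (x = b ∧ y = v))
  framing_v : G'.framing v = G.framing v - 1
  framing_b : G'.framing b = -1
  framing_other : ∀ x ∈ G.verts, x ≠ v → G'.framing x = G.framing x

/-- `G'` is the edge blowup of `G` at the edge `(u,w)`, with new vertex `b`: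
the edge `(u,w)` is replaced by a new `(-1)`-framed vertex `b` joined to both
`u` and `w`, whose framings each drop by 1. -/
structure EdgeBlowup (G G' : Plumbing) (u w b : ℕ) : Prop where
  edge : G.adj u w = true
  b_new : b ∉ G.verts
  verts_eq : G'.verts = insert b G.verts
  adj_iff : ∀ x y, (G'.adj x y = true) ↔
    ((G.adj x y = true ∧ ¬((x = u ∧ y = w) ∨ (x = w ∧ y = u))) ∨
     (x = b ∧ (y = u ∨ y = w)) ∨ (y = b ∧ (x = u ∨ x = w)))
  framing_u : G'.framing u = G.framing u - 1
  framing_w : G'.framing w = G.framing w - 1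
  framing_b : G'.framing b = -1
  framing_other : ∀ x ∈ G.verts, x ≠ u → x ≠ w → G'.framing x = G.framing x

/-- `G'` is obtained from `G` by a single blowup (at a vertex or at an edge). -/
def BlowupStep (G G' : Plumbing) : Prop :=
  (∃ v b, VertexBlowup G G' v b) ∨ (∃ u w b, EdgeBlowup G G' u w b)

/-- `G` blows down to `Δ`: `Δ` is obtained from `G` by a finite sequence of
blowdowns, equivalently `G` is obtained from `Δ` by a finite sequence of blowups. -/
def BlowsDownTo (G Δ : Plumbing) : Prop :=
  Relation.ReflTransGen (fun X Y : Plumbing => BlowupStep Y X) G Δ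

/-- `G'` is obtained from `G` by blowing down the vertex `v`,
i.e. `G` is a one-step blowup of `G'` whose new vertex is `v`. -/
def BlowdownAt (G G' : Plumbing) (v : ℕ) : Prop :=
  (∃ u, VertexBlowup G' G u v) ∨ (∃ u w, EdgeBlowup G' G u w v)

/-- The empty plumbing graph. -/
def IsEmptyGraph (G : Plumbing) : Prop := G.verts = ∅

/-- `G` blows down to the empty graph. -/
def BlowsDownToEmpty (G : Plumbing) : Prop :=
  ∃ E : Plumbing, E.IsEmptyGraph ∧ BlowsDownTo G E

/-- A single-vertex plumbing graph with framing `0`. -/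
def IsZeroVertexGraph (G : Plumbing) : Prop :=
  ∃ v, G.verts = {v} ∧ G.framing v = 0

/-- `G` blows down to the single-vertex graph with framing `0`. -/
def BlowsDownToZeroVertex (G : Plumbing) : Prop :=
  ∃ Z : Plumbing, Z.IsZeroVertexGraph ∧ BlowsDownTo G Z

/-- `G` is an induced subgraph of `H` with the same framings. -/
def IsInducedSubgraph (G H : Plumbing) : Prop :=
  G.verts ⊆ H.verts ∧
  (∀ u ∈ G.verts, ∀ v ∈ G.verts, G.adj u v = H.adj u v) ∧
  (∀ v ∈ G.verts, G.framing v = H.framing v)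

/-- `G` is sandwiched: it is an induced subgraph (with the same framings) of a
plumbing graph that blows down to the empty graph. -/
def Sandwiched (G : Plumbing) : Prop :=
  ∃ H : Plumbing, BlowsDownToEmpty H ∧ IsInducedSubgraph G H

/-- `G` is a planar multilink (pm) graph: it is an induced subgraph (with the same
framings) of a negative semidefinite plumbing graph that blows down to the
single-vertex graph with framing `0`. -/
def IsPM (G : Plumbing) : Prop :=
  ∃ H : Plumbing, H.NegSemiDef ∧ BlowsDownToZeroVertex H ∧ IsInducedSubgraph G H

/-- `H` is obtained from `G` by attaching finitely many new leaves with framing `-1`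
to vertices of `G`. -/
def AugmentedByLeaves (G H : Plumbing) : Prop :=
  IsInducedSubgraph G H ∧
  ∀ x ∈ H.verts, x ∉ G.verts →
    H.framing x = -1 ∧ ∃ v ∈ G.verts, ∀ y, (H.adj x y = true ↔ y = v)

/-- `H` is obtained from `G` by attaching a single new leaf `l` with framing `fr`
to the vertex `v`. -/
structure AttachLeaf (G H : Plumbing) (v l : ℕ) (fr : ℤ) : Prop where
  v_mem : v ∈ G.verts
  l_new : l ∉ G.verts
  verts_eq : H.verts = insert l G.verts
  adj_iff : ∀ x y, (H.adj x y = true) ↔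
    (G.adj x y = true ∨ (x = v ∧ y = l) ∨ (x = l ∧ y = v))
  framing_l : H.framing l = fr
  framing_other : ∀ x ∈ G.verts, H.framing x = G.framing x

/-- The plumbing graph obtained from `G` by decreasing the framing of `v` by `1`,
keeping all other framings and all edges. -/
def decFraming (G : Plumbing) (v : ℕ) : Plumbing :=
  { G with framing := Function.update G.framing v (G.framing v - 1) }

/-- The plumbing graph obtained from `G` by increasing the framing of `v` by `1`,
keeping all other framings and all edges. -/
def incFraming (G : Plumbing) (v : ℕ) : Plumbing :=
  { G with framing := Function.update G.framing v (G.framing v + 1) }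

/-- Membership in the Lipman cone `𝒮(Γ)`: all coordinates positive and
`Q_Γ(D, v) ≤ 0` for every vertex `v`. -/
def InLipman (G : Plumbing) (r : ℕ → ℤ) : Prop :=
  (∀ v ∈ G.verts, 0 < r v) ∧
  (∀ v ∈ G.verts, (∑ u ∈ G.verts, r u * G.q u v) ≤ 0)

end Plumbing

open Plumbing

section Aux

variable {N : ℕ}

lemma eVec_apply (j i : Fin N) : eVec j i = if i = j then 1 else 0 := by
  simp [eVec, Pi.single_apply]

lemma sum_eVec_apply (I : Finset (Fin N)) (i : Fin N) :
    (∑ j ∈ I, eVec j) i = if i ∈ I then 1 else 0 := by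
  rw [Finset.sum_apply]
  simp only [eVec_apply]
  rw [Finset.sum_ite_eq I i (fun _ => (1 : ℤ))]

lemma diagPair_sum_left (S : Finset ℕ) (f : ℕ → Fin N → ℤ) (y : Fin N → ℤ) :
    diagPair (∑ v ∈ S, f v) y = ∑ v ∈ S, diagPair (f v) y := by
  simp only [diagPair, Finset.sum_apply, Finset.sum_mul, ← Finset.sum_neg_distrib]
  rw [Finset.sum_comm]

lemma pairing_sum (G : Plumbing) {φ : ℕ → Fin N → ℤ} (hφ : G.IsPEmb φ)
    (S : Finset ℕ) (hS : S ⊆ G.verts) (u : ℕ) (hu : u ∈ G.verts) :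
    diagPair (∑ v ∈ S, φ v) (φ u) = ∑ v ∈ S, G.q v u := by
  rw [diagPair_sum_left]
  exact Finset.sum_congr rfl fun v hv => hφ.pairing v (hS hv) u hu

lemma q_nonneg_of_ne (G : Plumbing) {v u : ℕ} (h : v ≠ u) : 0 ≤ G.q v u := by
  unfold Plumbing.q
  simp only [h, if_false]
  split <;> norm_num

lemma q_eq_one (G : Plumbing) {v u : ℕ} (h : v ≠ u) (ha : G.adj v u = true) :
    G.q v u = 1 := by
  unfold Plumbing.q
  simp [h, ha]

lemma sum_q_ge_one (G : Plumbing) (S : Finset ℕ) (u : ℕ) (huS : u ∉ S)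
    {s : ℕ} (hsS : s ∈ S) (hadj : G.adj s u = true) :
    (1 : ℤ) ≤ ∑ v ∈ S, G.q v u := by
  have hne : s ≠ u := fun h => huS (h ▸ hsS)
  calc (1 : ℤ) = G.q s u := (q_eq_one G hne hadj).symm
    _ ≤ ∑ v ∈ S, G.q v u :=
      Finset.single_le_sum (fun v hv => q_nonneg_of_ne G (fun h => huS (by rwa [h] at hv))) hsS

lemma diagPair_neg_neg_nonpos (I J : Finset (Fin N)) :
    diagPair (-(∑ j ∈ I, eVec j)) (-(∑ j ∈ J, eVec j)) ≤ 0 := by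
  unfold diagPair
  apply neg_nonpos_of_nonneg
  apply Finset.sum_nonneg
  intro i _
  simp only [Pi.neg_apply, sum_eVec_apply]
  split_ifs <;> norm_num

lemma diagPair_neg_mixed_nonpos (I J : Finset (Fin N)) (δ : Fin N) (hδ : δ ∉ I) :
    diagPair (-(∑ j ∈ I, eVec j)) (eVec δ - ∑ j ∈ J, eVec j) ≤ 0 := by
  unfold diagPair
  apply neg_nonpos_of_nonneg
  apply Finset.sum_nonneg
  intro i _
  simp only [Pi.neg_apply, Pi.sub_apply, sum_eVec_apply, eVec_apply]
  by_cases h1 : i ∈ I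
  · have h2 : i ≠ δ := fun h => hδ (h ▸ h1)
    simp only [h1, if_true, h2, if_false]
    split_ifs <;> norm_num
  · simp [h1]

/-- The core lemma: enlarging a `-∑ e_j`-type connected subgraph by an adjacent
vertex keeps the `-∑ e_j` form. -/
lemma core_lemma (G : Plumbing) {φ : ℕ → Fin N → ℤ} (hφ : G.IsPEmb φ)
    (S : Finset ℕ) (hS : S ⊆ G.verts) (hconn : G.ConnOn S)
    (I : Finset (Fin N)) (hsum : (∑ v ∈ S, φ v) = -(∑ j ∈ I, eVec j))
    (u : ℕ) (hu : u ∈ G.verts) (huS : u ∉ S)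
    (s : ℕ) (hsS : s ∈ S) (hadj : G.adj u s = true) :
    ∃ I' : Finset (Fin N), (∑ v ∈ insert u S, φ v) = -(∑ j ∈ I', eVec j) := by
  have hGadj : G.toSG.Adj u s := hadj
  have hTsub : insert u S ⊆ G.verts := Finset.insert_subset hu hS
  have hTconn : G.ConnOn (insert u S) := by
    intro a ha b hb
    rcases Finset.mem_insert.mp ha with rfl | haS
    · rcases Finset.mem_insert.mp hb with rfl | hbS
      · exact ⟨SimpleGraph.Walk.nil, by simp⟩
      · obtain ⟨p, hp⟩ := hconn s hsS b hbS
        refine ⟨SimpleGraph.Walk.cons hGadj p, ?_⟩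
        intro x hx
        rw [SimpleGraph.Walk.support_cons, List.mem_cons] at hx
        rcases hx with rfl | hx
        · exact Finset.mem_insert_self _ _
        · exact Finset.mem_insert_of_mem (hp x hx)
    · rcases Finset.mem_insert.mp hb with rfl | hbS
      · obtain ⟨p, hp⟩ := hconn s hsS a haS
        refine ⟨(SimpleGraph.Walk.cons hGadj p).reverse, ?_⟩
        intro x hx
        rw [SimpleGraph.Walk.support_reverse, List.mem_reverse,
          SimpleGraph.Walk.support_cons, List.mem_cons] at hx
        rcases hx with rfl | hx
        · exact Finset.mem_insert_self _ _
        · exact Finset.mem_insert_of_mem (hp x hx)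
      · obtain ⟨p, hp⟩ := hconn a haS b hbS
        exact ⟨p, fun x hx => Finset.mem_insert_of_mem (hp x hx)⟩
  rcases hφ.subgraphSum (insert u S) hTsub ⟨u, Finset.mem_insert_self _ _⟩ hTconn with
    ⟨γ, I', hγI', hsum'⟩ | h2
  swap
  · exact h2
  -- derive a contradiction
  exfalso
  rw [Finset.sum_insert huS] at hsum'
  -- value of φ u at γ
  have hvalγ : φ u γ = 1 + (if γ ∈ I then 1 else 0) := by
    have := congrFun hsum' γ
    have h1 := congrFun hsum γ
    simp only [Pi.add_apply, Pi.sub_apply, Pi.neg_apply, sum_eVec_apply, eVec_apply,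
      if_pos rfl, if_neg hγI'] at this h1
    rw [h1] at this
    split_ifs at this ⊢ <;> linarith
  -- form of φ u
  have hconn_u : G.ConnOn {u} := by
    intro a ha b hb
    simp only [Finset.mem_singleton] at ha hb
    subst ha; subst hb
    exact ⟨SimpleGraph.Walk.nil, by simp⟩
  rcases hφ.subgraphSum {u} (Finset.singleton_subset_iff.mpr hu) ⟨u, Finset.mem_singleton_self u⟩ hconn_u with
    ⟨δ, J, hδJ, hφu⟩ | ⟨J, hφu⟩
  swap
  · rw [Finset.sum_singleton] at hφu
    have := congrFun hφu γ
    simp only [Pi.neg_apply, sum_eVec_apply, hvalγ] at this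
    split_ifs at this <;> linarith
  rw [Finset.sum_singleton] at hφu
  -- deduce γ = δ and γ ∉ I
  have hγδ : γ = δ ∧ γ ∉ I := by
    have hv := congrFun hφu γ
    simp only [Pi.sub_apply, sum_eVec_apply, eVec_apply, hvalγ] at hv
    by_cases h1 : γ = δ
    · refine ⟨h1, fun h3 => ?_⟩
      rw [if_pos h1, if_pos h3] at hv
      split_ifs at hv <;> linarith
    · exfalso
      rw [if_neg h1] at hv
      split_ifs at hv <;> linarith
  -- pairing contradiction
  have hA : diagPair (∑ v ∈ S, φ v) (φ u) = ∑ v ∈ S, G.q v u :=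
    pairing_sum G hφ S hS u hu
  have hge : (1 : ℤ) ≤ ∑ v ∈ S, G.q v u :=
    sum_q_ge_one G S u huS hsS (by rw [G.adj_symm]; exact hadj)
  have hle : diagPair (∑ v ∈ S, φ v) (φ u) ≤ 0 := by
    rw [hsum, hφu]
    exact diagPair_neg_mixed_nonpos I J δ (hγδ.1 ▸ hγδ.2)
  linarith

/-- Part (iii): every connected subgraph containing a `-∑`-type vertex sums to `-∑` form. -/
lemma prop3_lemma (G : Plumbing) {φ : ℕ → Fin N → ℤ} (hφ : G.IsPEmb φ)
    (w : ℕ) (hw : w ∈ G.verts) (W : Finset (Fin N))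
    (hφw : φ w = -(∑ j ∈ W, eVec j)) :
    ∀ S : Finset ℕ, S ⊆ G.verts → G.ConnOn S → w ∈ S →
      ∃ I : Finset (Fin N), (∑ v ∈ S, φ v) = -(∑ j ∈ I, eVec j) := by
  intro S
  induction S using Finset.strongInduction with
  | _ S ih =>
  intro hSsub hSconn hwS
  by_cases hS1 : ∀ u ∈ S, u = w
  · have hSe : S = {w} := by
      apply Finset.eq_singleton_iff_unique_mem.mpr
      exact ⟨hwS, hS1⟩
    exact ⟨W, by rw [hSe, Finset.sum_singleton, hφw]⟩
  push_neg at hS1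
  obtain ⟨u0, hu0S, hu0ne⟩ := hS1
  -- the induced graph on S
  set H : SimpleGraph ℕ :=
    { Adj := fun x y => G.toSG.Adj x y ∧ x ∈ S ∧ y ∈ S
      symm := ⟨fun x y h => ⟨h.1.symm, h.2.2, h.2.1⟩⟩
      loopless := ⟨fun x h => G.toSG.irrefl h.1⟩ } with hHdef
  have hHadj : ∀ {x y}, H.Adj x y ↔ (G.toSG.Adj x y ∧ x ∈ S ∧ y ∈ S) := by
    intro x y; rw [hHdef]
  have key : ∀ {a b : ℕ} (p : G.toSG.Walk a b), (∀ x ∈ p.support, x ∈ S) →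
      H.Reachable a b := by
    intro a b p
    induction p with
    | nil => exact fun _ => SimpleGraph.Reachable.refl _
    | cons h q ihp =>
      intro hsupp
      have ha := hsupp _ (SimpleGraph.Walk.cons h q).start_mem_support
      have hb := hsupp _ (by
        rw [SimpleGraph.Walk.support_cons, List.mem_cons]
        exact Or.inr q.start_mem_support)
      have hadj' : H.Adj _ _ := hHadj.mpr ⟨h, ha, hb⟩
      exact hadj'.reachable.trans (ihp fun x hx => hsupp x (by
        rw [SimpleGraph.Walk.support_cons, List.mem_cons]; exact Or.inr hx))
  have hreach : ∀ a ∈ S, ∀ b ∈ S, H.Reachable a b := by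
    intro a ha b hb
    obtain ⟨p, hp⟩ := hSconn a ha b hb
    exact key p hp
  have Hsupp : ∀ {a b : ℕ} (q : H.Walk a b), a ∈ S → ∀ x ∈ q.support, x ∈ S := by
    intro a b q
    induction q with
    | nil => intro ha x hx; simp at hx; exact hx ▸ ha
    | cons h p ihp =>
      intro ha x hx
      rw [SimpleGraph.Walk.support_cons, List.mem_cons] at hx
      rcases hx with rfl | hx
      · exact ha
      · exact ihp (hHadj.mp h).2.2 x hx
  have HtoG : ∀ {a b : ℕ} (q : H.Walk a b),
      ∃ p : G.toSG.Walk a b, p.support = q.support := by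
    intro a b q
    induction q with
    | nil => exact ⟨SimpleGraph.Walk.nil, rfl⟩
    | cons h p ihp =>
      obtain ⟨p', hp'⟩ := ihp
      exact ⟨SimpleGraph.Walk.cons (hHadj.mp h).1 p', by
        rw [SimpleGraph.Walk.support_cons, SimpleGraph.Walk.support_cons, hp']⟩
  -- choose a farthest vertex u
  obtain ⟨u, huS, hmax⟩ := Finset.exists_max_image S (fun v => H.dist w v) ⟨w, hwS⟩
  have hdu0 : 0 < H.dist w u0 :=
    (hreach w hwS u0 hu0S).pos_dist_of_ne (Ne.symm hu0ne)
  have hdu : 0 < H.dist w u := lt_of_lt_of_le hdu0 (hmax u0 hu0S)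
  have huw : u ≠ w := by
    intro h; rw [h, SimpleGraph.dist_self] at hdu; exact lt_irrefl 0 hdu
  -- walks from w avoiding u
  have havoid : ∀ a ∈ S, a ≠ u → ∃ p : H.Walk w a, u ∉ p.support := by
    intro a haS hane
    obtain ⟨p, hp⟩ := (hreach w hwS a haS).exists_walk_length_eq_dist
    refine ⟨p, fun humem => ?_⟩
    have hsplit := congrArg SimpleGraph.Walk.length (p.take_spec humem)
    rw [SimpleGraph.Walk.length_append] at hsplit
    have h1 : H.dist w u ≤ (p.takeUntil u humem).length := SimpleGraph.dist_le _
    have h2 : H.dist w a ≤ H.dist w u := hmax a haS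
    have h3 : (p.dropUntil u humem).length ≠ 0 := by
      intro h
      exact hane (SimpleGraph.Walk.eq_of_length_eq_zero h).symm
    omega
  -- S.erase u is still connected
  have hconn' : G.ConnOn (S.erase u) := by
    intro a ha b hb
    obtain ⟨hane, haS⟩ := Finset.mem_erase.mp ha
    obtain ⟨hbne, hbS⟩ := Finset.mem_erase.mp hb
    obtain ⟨p1, hp1⟩ := havoid a haS hane
    obtain ⟨p2, hp2⟩ := havoid b hbS hbne
    obtain ⟨p, hps⟩ := HtoG (p1.reverse.append p2)
    refine ⟨p, fun x hx => ?_⟩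
    rw [hps, SimpleGraph.Walk.mem_support_append_iff, SimpleGraph.Walk.support_reverse,
      List.mem_reverse] at hx
    rcases hx with hx | hx
    · exact Finset.mem_erase.mpr ⟨fun h => hp1 (h ▸ hx), Hsupp p1 hwS x hx⟩
    · exact Finset.mem_erase.mpr ⟨fun h => hp2 (h ▸ hx), Hsupp p2 hwS x hx⟩
  -- u has a neighbor s in S.erase u
  obtain ⟨pq⟩ := hreach u huS w hwS
  obtain ⟨s, hus, q, -⟩ : ∃ (s : ℕ) (_ : H.Adj u s) (q : H.Walk s w), True := by
    cases pq with
    | nil => exact absurd rfl huw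
    | cons h q => exact ⟨_, h, q, trivial⟩
  have hsS : s ∈ S := (hHadj.mp hus).2.2
  have hsu : s ≠ u := ((hHadj.mp hus).1).ne'
  have hadj_us : G.adj u s = true := (hHadj.mp hus).1
  have hwS' : w ∈ S.erase u := Finset.mem_erase.mpr ⟨Ne.symm huw, hwS⟩
  obtain ⟨I, hI⟩ := ih (S.erase u) (Finset.erase_ssubset huS)
    (Finset.Subset.trans (Finset.erase_subset u S) hSsub) hconn' hwS'
  obtain ⟨I', hI'⟩ := core_lemma G hφ (S.erase u)
    (Finset.Subset.trans (Finset.erase_subset u S) hSsub) hconn' I hI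
    u (hSsub huS) (Finset.notMem_erase u S) s (Finset.mem_erase.mpr ⟨hsu, hsS⟩) hadj_us
  rw [Finset.insert_erase huS] at hI'
  exact ⟨I', hI'⟩

end Aux

open Plumbing

/-- STATEMENT 13: properties of p-embeddings. (i) If a nonempty connected subgraph
sums to `-∑_{j∈I} e_j`, then so does its enlargement by an adjacent vertex.
(ii) There is at most one vertex whose image has no positive basis element, and
every connected subgraph containing such a vertex sums to the form `-∑_{j∈I} e_j`. -/
theorem stmt13_pemb_props {N : ℕ} (G : Plumbing) (hTree : G.IsTree)
    (hNeg : G.NegDef) (φ : ℕ → Fin N → ℤ) (hφ : G.IsPEmb φ) :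
    (∀ S : Finset ℕ, S ⊆ G.verts → S.Nonempty → G.ConnOn S →
      (∃ I : Finset (Fin N), (∑ v ∈ S, φ v) = -(∑ j ∈ I, eVec j)) →
      ∀ u ∈ G.verts, u ∉ S → (∃ s ∈ S, G.adj u s = true) →
      ∃ I' : Finset (Fin N), (∑ v ∈ insert u S, φ v) = -(∑ j ∈ I', eVec j)) ∧
    (∀ w ∈ G.verts, ∀ w' ∈ G.verts,
      (∃ I : Finset (Fin N), φ w = -(∑ j ∈ I, eVec j)) →
      (∃ I : Finset (Fin N), φ w' = -(∑ j ∈ I, eVec j)) → w = w') ∧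
    (∀ w ∈ G.verts, (∃ I : Finset (Fin N), φ w = -(∑ j ∈ I, eVec j)) →
      ∀ S : Finset ℕ, S ⊆ G.verts → G.ConnOn S → w ∈ S →
      ∃ I : Finset (Fin N), (∑ v ∈ S, φ v) = -(∑ j ∈ I, eVec j)) := by
  refine ⟨?_, ?_, ?_⟩
  · intro S hsub _hne hconn hex u hu huS hadjx
    obtain ⟨I, hsum⟩ := hex
    obtain ⟨s, hsS, hadj⟩ := hadjx
    exact core_lemma G hφ S hsub hconn I hsum u hu huS s hsS hadj
  · intro w hw w' hw' hew hew'
    obtain ⟨Iw, hIw⟩ := hew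
    obtain ⟨Iw', hIw'⟩ := hew'
    by_contra hne
    obtain ⟨p, hp⟩ := hTree.2 w' hw' w hw
    obtain ⟨p2, hpath, hsupp2⟩ : ∃ p2 : G.toSG.Walk w' w, p2.IsPath ∧
        ∀ x ∈ p2.support, x ∈ G.verts :=
      ⟨p.bypass, p.bypass_isPath, fun x hx => hp x (p.support_bypass_subset hx)⟩
    cases p2 with
    | nil => exact hne rfl
    | cons h q =>
      rename_i s
      rw [SimpleGraph.Walk.cons_isPath_iff] at hpath
      set S := q.support.toFinset with hSdef
      have hSsub : S ⊆ G.verts := fun x hx => hsupp2 x (by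
        rw [SimpleGraph.Walk.support_cons]
        exact List.mem_cons_of_mem _ (List.mem_toFinset.mp hx))
      have hSconn : G.ConnOn S := by
        intro a ha b hb
        have ha' := List.mem_toFinset.mp ha
        have hb' := List.mem_toFinset.mp hb
        refine ⟨(q.dropUntil a ha').append (q.dropUntil b hb').reverse, fun x hx => ?_⟩
        rw [SimpleGraph.Walk.mem_support_append_iff] at hx
        rcases hx with hx | hx
        · exact List.mem_toFinset.mpr (q.support_dropUntil_subset ha' hx)
        · rw [SimpleGraph.Walk.support_reverse, List.mem_reverse] at hx
          exact List.mem_toFinset.mpr (q.support_dropUntil_subset hb' hx)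
      have hwmem : w ∈ S := List.mem_toFinset.mpr q.end_mem_support
      obtain ⟨I'', hI''⟩ := prop3_lemma G hφ w hw Iw hIw S hSsub hSconn hwmem
      have hw'S : w' ∉ S := fun hx => hpath.2 (List.mem_toFinset.mp hx)
      have hsS : s ∈ S := List.mem_toFinset.mpr q.start_mem_support
      have hadj' : G.adj s w' = true := by
        have hx : G.adj w' s = true := h
        rw [G.adj_symm]; exact hx
      have hge := sum_q_ge_one G S w' hw'S hsS hadj'
      have hA := pairing_sum G hφ S hSsub w' hw'
      have hle : diagPair (∑ v ∈ S, φ v) (φ w') ≤ 0 := by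
        rw [hI'', hIw']
        exact diagPair_neg_neg_nonpos _ _
      rw [hA] at hle
      linarith
  · intro w hw hex S hsub hconn hwS
    obtain ⟨I, hI⟩ := hex
    exact prop3_lemma G hφ w hw I hI S hsub hconn hwS
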